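/- Given reconciliation maps ψ_1,…,ψ_l for (P,H,φ) (l ≥ 1), the map ψ_med defined by letting ψ_med(v) be the unique vertex w ∈ A(v) with d_H(m(v),w) = zmed(d_H(m(v),ψ_1(v)),…,d_H(m(v),ψ_l(v))) is itself a reconciliation map for (P,H,φ). -/

import Mathlib

open Classical

namespace Recon

/-- `Anc p u v` : `u` is above or equal to `v` (i.e. `u` is an ancestor of `v`)
with respect to the parent map `p` of a rooted tree. -/
def Anc {V : Type*} (p : V → V) (u v : V) : Prop := ∃ n : ℕ, p^[n] v = u

/-- `u` is strictly above `v`. -/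
def SAnc {V : Type*} (p : V → V) (u v : V) : Prop := Anc p u v ∧ u ≠ v

/-- The length of the (undirected) path between `u` and `v` in the tree with parent map `p`. -/
noncomputable def tdist {V : Type*} (p : V → V) (u v : V) : ℕ :=
  sInf {k : ℕ | ∃ n m : ℕ, n + m = k ∧ p^[n] u = p^[m] v}

/-- `p` is the parent map of a rooted tree on `V` with root `r` and depth function `dp`. -/
structure IsRootedTree {V : Type*} (p : V → V) (r : V) (dp : V → ℕ) : Prop where
  parent_root : p r = r
  depth_root : dp r = 0
  depth_parent : ∀ v, v ≠ r → dp v = dp (p v) + 1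

/-- `v` is a leaf: it has no children. -/
def IsLeaf {V : Type*} (p : V → V) (v : V) : Prop := ∀ u, p u = v → u = v

/-- `u` is a child of `v`. -/
def IsChild {V : Type*} (p : V → V) (u v : V) : Prop := p u = v ∧ u ≠ v

/-- every non-leaf vertex has exactly two children (binary tree). -/
def IsBinary {V : Type*} (p : V → V) : Prop :=
  ∀ v, ¬ IsLeaf p v →
    ∃ u w, u ≠ w ∧ IsChild p u v ∧ IsChild p w v ∧ ∀ z, IsChild p z v → z = u ∨ z = w

/-- `w` is a least common ancestor of the set `S`. -/
def IsLCA {V : Type*} (p : V → V) (S : Set V) (w : V) : Prop :=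
  (∀ s ∈ S, Anc p w s) ∧ ∀ w', (∀ s ∈ S, Anc p w' s) → Anc p w' w

/-- The set `A(v)`: all vertices on the path from the root `r` down to `mv`. -/
def ASet {V : Type*} (p : V → V) (r : V) (mv : V) : Set V :=
  {w | Anc p r w ∧ Anc p w mv}

/-- `ψ` is a reconciliation map for `(P,H,φ)`: it restricts to `φ` on the leaves of `P`,
and the image of a vertex is above or equal to the image of each of its children. -/
def IsRecon {VP VH : Type*} (pP : VP → VP) (pH : VH → VH) (φ ψ : VP → VH) : Prop :=
  (∀ x, IsLeaf pP x → ψ x = φ x) ∧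
  ∀ v v', IsChild pP v' v → Anc pH (ψ v) (ψ v')

/-- The path-distance between two maps `V(P) → V(H)`. -/
noncomputable def dpath {VP VH : Type*} [Fintype VP] (pH : VH → VH) (ψ ψ' : VP → VH) : ℕ :=
  ∑ v : VP, tdist pH (ψ v) (ψ' v)

/-- One edit (up or down) operation transforming `ψ` into `ψ'`. -/
def EditStep {VP VH : Type*} [DecidableEq VP] (pP : VP → VP) (pH : VH → VH) (rH : VH)
    (m : VP → VH) (ψ ψ' : VP → VH) : Prop :=
  ∃ w : VP,
    (ψ w ≠ rH ∧ ψ w ≠ ψ (pP w) ∧ ψ' = Function.update ψ w (pH (ψ w))) ∨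
    (¬ IsLeaf pP w ∧ SAnc pH (ψ w) (m w) ∧ (∀ v', IsChild pP v' w → ψ w ≠ ψ v') ∧
      ∃ c, IsChild pH c (ψ w) ∧ c ∈ ASet pH rH (m w) ∧ ψ' = Function.update ψ w c)

/-- The edit distance: the least number of up/down operations transforming `ψ` into `ψ'`. -/
noncomputable def editDist {VP VH : Type*} [DecidableEq VP] (pP : VP → VP) (pH : VH → VH)
    (rH : VH) (m : VP → VH) (ψ ψ' : VP → VH) : ℕ :=
  sInf {n : ℕ | ∃ f : ℕ → VP → VH, f 0 = ψ ∧ f n = ψ' ∧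
    ∀ i < n, EditStep pP pH rH m (f i) (f (i + 1))}

/-- The median of a multiset of reals. -/
noncomputable def med (A : Multiset ℝ) : ℝ :=
  if A.card % 2 = 1 then (A.sort (· ≤ ·)).getD (A.card / 2) 0
  else ((A.sort (· ≤ ·)).getD (A.card / 2 - 1) 0 + (A.sort (· ≤ ·)).getD (A.card / 2) 0) / 2

/-- The median of a multiset of integers, rounded to the nearest integer (halves up). -/
noncomputable def zmed (A : Multiset ℤ) : ℤ :=
  round (med (A.map (fun z => (z : ℝ))))

/-! Every reconciliation map sends `v` into the chain `A(v)` of ancestors of `m v`, on which a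
vertex is determined by its distance to `m v`. For a child `v'` of `v`, each `ψᵢ` satisfies
`d(m v', ψᵢ v') ≤ d(m v', m v) + d(m v, ψᵢ v)` because `ψᵢ v ⪰ ψᵢ v'`. The rounded median is
monotone and commutes with adding a constant, so the same inequality holds for `ψ_med`, and on the
chain above `m v'` it says precisely that `ψ_med v ⪰ ψ_med v'`. At a leaf all distances vanish, so
`ψ_med` agrees with `m = φ` there. -/

section Ancestry

variable {V : Type*} {p : V → V} {r : V} {dp : V → ℕ}

theorem anc_refl (u : V) : Anc p u u := ⟨0, rfl⟩

theorem Anc.trans {u v w : V} (huv : Anc p u v) (hvw : Anc p v w) : Anc p u w := by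
  obtain ⟨n, rfl⟩ := huv
  obtain ⟨m, rfl⟩ := hvw
  exact ⟨n + m, Function.iterate_add_apply p n m w⟩

theorem anc_total_of_anc {u w x : V} (hu : Anc p u x) (hw : Anc p w x) :
    Anc p u w ∨ Anc p w u := by
  obtain ⟨n, rfl⟩ := hu
  obtain ⟨m, rfl⟩ := hw
  rcases le_total n m with hnm | hmn
  · exact .inr ⟨m - n, by rw [← Function.iterate_add_apply, Nat.sub_add_cancel hnm]⟩
  · exact .inl ⟨n - m, by rw [← Function.iterate_add_apply, Nat.sub_add_cancel hmn]⟩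

theorem eq_of_anc_of_isLeaf {x y : V} (hx : IsLeaf p x) (hxy : Anc p x y) : y = x := by
  obtain ⟨n, hn⟩ := hxy
  induction n generalizing y with
  | zero => exact hn
  | succ n ih => exact hx y (ih hn)

theorem tdist_self (u : V) : tdist p u u = 0 :=
  Nat.eq_zero_of_le_zero (Nat.sInf_le ⟨0, 0, rfl, rfl⟩)

namespace IsRootedTree

variable (h : IsRootedTree p r dp)
include h

theorem depth_parent_eq (v : V) : dp (p v) = dp v - 1 := by
  by_cases hv : v = r
  · subst hv
    rw [h.parent_root, h.depth_root]
  · rw [h.depth_parent v hv]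
    omega

theorem depth_iterate (n : ℕ) (v : V) : dp (p^[n] v) = dp v - n := by
  induction n with
  | zero => rfl
  | succ n ih => rw [Function.iterate_succ_apply', h.depth_parent_eq, ih, Nat.sub_sub]

theorem eq_root_of_depth_eq_zero {v : V} (hv : dp v = 0) : v = r := by
  by_contra hvr
  have := h.depth_parent v hvr
  omega

theorem iterate_depth (v : V) : p^[dp v] v = r :=
  h.eq_root_of_depth_eq_zero (by rw [h.depth_iterate, Nat.sub_self])

theorem depth_le_of_anc {u v : V} (huv : Anc p u v) : dp u ≤ dp v := by
  obtain ⟨n, rfl⟩ := huv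
  rw [h.depth_iterate]
  exact Nat.sub_le _ _

theorem iterate_sub_depth_of_anc {u v : V} (huv : Anc p u v) : p^[dp v - dp u] v = u := by
  obtain ⟨n, rfl⟩ := huv
  rw [h.depth_iterate]
  by_cases hn : n ≤ dp v
  · rw [Nat.sub_sub_self hn]
  · rw [show dp v - n = 0 by omega, Nat.sub_zero, h.iterate_depth,
      h.eq_root_of_depth_eq_zero (v := p^[n] v) (by rw [h.depth_iterate]; omega)]

theorem eq_of_anc_of_depth_le {u v : V} (huv : Anc p u v) (hd : dp v ≤ dp u) : u = v := by
  rw [← h.iterate_sub_depth_of_anc huv, show dp v - dp u = 0 by omega]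
  rfl

theorem anc_of_depth_le {u w x : V} (hu : Anc p u x) (hw : Anc p w x) (hd : dp u ≤ dp w) :
    Anc p u w := by
  rcases anc_total_of_anc hu hw with huw | hwu
  · exact huw
  · rw [h.eq_of_anc_of_depth_le hwu hd]
    exact anc_refl u

theorem tdist_of_anc {u v : V} (huv : Anc p u v) : tdist p v u = dp v - dp u := by
  refine le_antisymm (Nat.sInf_le ⟨dp v - dp u, 0, rfl, h.iterate_sub_depth_of_anc huv⟩) ?_
  refine le_csInf ⟨_, dp v - dp u, 0, rfl, h.iterate_sub_depth_of_anc huv⟩ ?_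
  rintro k ⟨n, m, rfl, hnm⟩
  have := congrArg dp hnm
  rw [h.depth_iterate, h.depth_iterate] at this
  have := h.depth_le_of_anc huv
  omega

theorem eq_of_anc_of_tdist_eq_zero {u v : V} (huv : Anc p u v) (h0 : tdist p v u = 0) : u = v :=
  h.eq_of_anc_of_depth_le huv (by rw [h.tdist_of_anc huv] at h0; omega)

theorem anc_iff_tdist_le {u w x y : V} (hu : Anc p u x) (hw : Anc p w y) (hxy : Anc p x y) :
    Anc p u w ↔ tdist p y w ≤ tdist p y x + tdist p x u := by
  have hux := h.depth_le_of_anc hu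
  have hwy := h.depth_le_of_anc hw
  have hxy' := h.depth_le_of_anc hxy
  rw [h.tdist_of_anc hu, h.tdist_of_anc hw, h.tdist_of_anc hxy]
  refine ⟨fun huw => ?_, fun hd => h.anc_of_depth_le (hu.trans hxy) hw (by omega)⟩
  have := h.depth_le_of_anc huw
  omega

end IsRootedTree

end Ancestry

section Median

theorem _root_.List.Pairwise.getElem_le_iff_lt_countP {α : Type*} [LinearOrder α] {L : List α}
    (hL : L.Pairwise (· ≤ ·)) {k : ℕ} (hk : k < L.length) (t : α) :
    L[k] ≤ t ↔ k < L.countP (· ≤ t) := by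
  have hmono : ∀ i j (hi : i < L.length) (hj : j < L.length), i ≤ j → L[i] ≤ L[j] :=
    fun i j hi hj hij => hL.rel_get_of_le (a := ⟨i, hi⟩) (b := ⟨j, hj⟩) hij
  constructor
  · intro hkt
    have hprefix : (L.take (k + 1)).countP (· ≤ t) = k + 1 := by
      rw [List.countP_eq_length.mpr, List.length_take, min_eq_left hk]
      intro x hx
      obtain ⟨j, hj, rfl⟩ := List.getElem_of_mem hx
      simp only [List.length_take] at hj
      simpa using (hmono j k (by omega) hk (by omega)).trans hkt
    have := (List.take_sublist (k + 1) L).countP_le (p := fun x => decide (x ≤ t))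
    omega
  · intro hcount
    by_contra! htk
    have hsuffix : (L.drop k).countP (· ≤ t) = 0 := by
      rw [List.countP_eq_zero]
      intro x hx
      obtain ⟨j, hj, rfl⟩ := List.getElem_of_mem hx
      simp only [List.length_drop] at hj
      simpa [List.getElem_drop] using htk.trans_le (hmono k (k + j) hk (by omega) (by omega))
    have := List.countP_append (l₁ := L.take k) (l₂ := L.drop k) (p := fun x => decide (x ≤ t))
    rw [List.take_append_drop, hsuffix] at this
    have := (L.take k).countP_le_length (p := fun x => decide (x ≤ t))
    simp only [List.length_take] at this
    omega

variable {α ι : Type*} [LinearOrder α]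

theorem getD_sort_map_le_getD_sort_map {s : Multiset ι} {f g : ι → α}
    (hfg : ∀ i ∈ s, f i ≤ g i) (k : ℕ) (d : α) :
    ((s.map f).sort (· ≤ ·)).getD k d ≤ ((s.map g).sort (· ≤ ·)).getD k d := by
  by_cases hk : k < Multiset.card s
  · have hkf : k < ((s.map f).sort (· ≤ ·)).length := by simpa using hk
    have hkg : k < ((s.map g).sort (· ≤ ·)).length := by simpa using hk
    rw [List.getD_eq_getElem _ _ hkf, List.getD_eq_getElem _ _ hkg,
      (Multiset.pairwise_sort _ _).getElem_le_iff_lt_countP hkf]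
    have hcount (t : α) : ((s.map g).sort (· ≤ ·)).countP (· ≤ t) ≤
        ((s.map f).sort (· ≤ ·)).countP (· ≤ t) := by
      rw [← Multiset.coe_countP, ← Multiset.coe_countP, Multiset.sort_eq, Multiset.sort_eq]
      obtain ⟨L, rfl⟩ := Quot.exists_rep s
      simp only [Multiset.quot_mk_to_coe'', Multiset.map_coe, Multiset.coe_countP, List.countP_map]
      exact List.countP_mono_left fun i hi hgi => by
        simpa using (hfg i hi).trans (by simpa using hgi)
    exact (((Multiset.pairwise_sort _ _).getElem_le_iff_lt_countP hkg _).mp le_rfl).trans_le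
      (hcount _)
  · rw [List.getD_eq_default _ _ (by simpa using hk), List.getD_eq_default _ _ (by simpa using hk)]

theorem med_map_mono {s : Multiset ι} {f g : ι → ℝ} (hfg : ∀ i ∈ s, f i ≤ g i) :
    med (s.map f) ≤ med (s.map g) := by
  have h := getD_sort_map_le_getD_sort_map hfg (d := 0)
  simp only [med, Multiset.card_map]
  split_ifs
  · exact h _
  · linarith [h (Multiset.card s / 2 - 1), h (Multiset.card s / 2)]

theorem med_map_const_add (c : ℝ) {A : Multiset ℝ} (hA : A ≠ 0) :
    med (A.map (c + ·)) = c + med A := by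
  have hsort : (A.map (c + ·)).sort (· ≤ ·) = (A.sort (· ≤ ·)).map (c + ·) :=
    (Multiset.map_sort (c + ·) A _ _ fun a _ b _ => (add_le_add_iff_left c).symm).symm
  have hget (k : ℕ) (hk : k < Multiset.card A) :
      ((A.sort (· ≤ ·)).map (c + ·)).getD k 0 = c + (A.sort (· ≤ ·)).getD k 0 := by
    rw [List.getD_eq_getElem _ _ (by simpa), List.getD_eq_getElem _ _ (by simpa), List.getElem_map]
  have hpos : 0 < Multiset.card A := Multiset.card_pos.mpr hA
  simp only [med, Multiset.card_map, hsort]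
  split_ifs
  · exact hget _ (by omega)
  · rw [hget _ (by omega), hget _ (by omega)]
    ring

theorem med_eq_of_forall_eq {A : Multiset ℝ} (hA : A ≠ 0) {a : ℝ} (h : ∀ x ∈ A, x = a) :
    med A = a := by
  have hget (k : ℕ) (hk : k < Multiset.card A) : (A.sort (· ≤ ·)).getD k 0 = a := by
    rw [List.getD_eq_getElem _ _ (by simpa)]
    exact h _ ((Multiset.mem_sort _).mp (List.getElem_mem _))
  have hpos : 0 < Multiset.card A := Multiset.card_pos.mpr hA
  simp only [med]
  split_ifs
  · exact hget _ (by omega)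
  · rw [hget _ (by omega), hget _ (by omega)]
    ring

-- The coercion `fun z => (z : ℝ)` in `zmed` elaborates through the `Multiset` monad.
theorem zmed_eq_round_med_map_cast (A : Multiset ℤ) :
    zmed A = round (med (A.map ((↑) : ℤ → ℝ))) := by
  simp [zmed, Multiset.bind_singleton]

theorem zmed_map_mono {s : Multiset ι} {f g : ι → ℤ} (hfg : ∀ i ∈ s, f i ≤ g i) :
    zmed (s.map f) ≤ zmed (s.map g) := by
  simp only [zmed_eq_round_med_map_cast, Multiset.map_map, round_eq]
  exact Int.floor_mono (add_le_add_left (med_map_mono fun i hi => Int.cast_le.mpr (hfg i hi)) _)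

theorem zmed_map_const_add (c : ℤ) {s : Multiset ι} (hs : s ≠ 0) (f : ι → ℤ) :
    zmed (s.map fun i => c + f i) = c + zmed (s.map f) := by
  have hcast : (s.map fun i => c + f i).map ((↑) : ℤ → ℝ) =
      ((s.map f).map ((↑) : ℤ → ℝ)).map ((c : ℝ) + ·) := by
    simp only [Multiset.map_map, Function.comp_def, Int.cast_add]
  rw [zmed_eq_round_med_map_cast, hcast, med_map_const_add _ (by simpa using hs),
    round_intCast_add, zmed_eq_round_med_map_cast]

theorem zmed_eq_of_forall_eq {A : Multiset ℤ} (hA : A ≠ 0) {a : ℤ} (h : ∀ x ∈ A, x = a) :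
    zmed A = a := by
  rw [zmed_eq_round_med_map_cast, med_eq_of_forall_eq (a := a) (by simpa using hA), round_intCast]
  simpa using fun x hx => congrArg ((↑) : ℤ → ℝ) (h x hx)

end Median

section Reconciliation

variable {VP VH : Type*} {pP : VP → VP} {pH : VH → VH} {φ ψ : VP → VH} {m : VP → VH}

def leafImage (pP : VP → VP) (φ : VP → VH) (v : VP) : Set VH :=
  {h | ∃ x, IsLeaf pP x ∧ Anc pP v x ∧ φ x = h}

theorem IsRecon.anc_of_anc (hψ : IsRecon pP pH φ ψ) {u v : VP} (huv : Anc pP u v) :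
    Anc pH (ψ u) (ψ v) := by
  obtain ⟨n, rfl⟩ := huv
  induction n with
  | zero => exact anc_refl _
  | succ n ih =>
    rw [Function.iterate_succ_apply']
    by_cases hroot : pP (pP^[n] v) = pP^[n] v
    · rwa [hroot]
    · exact (hψ.2 _ _ ⟨rfl, Ne.symm hroot⟩).trans ih

theorem IsRecon.anc_lca (hψ : IsRecon pP pH φ ψ) (hm : ∀ v, IsLCA pH (leafImage pP φ v) (m v))
    (v : VP) : Anc pH (ψ v) (m v) :=
  (hm v).2 _ fun _ ⟨x, hx, hvx, hφx⟩ => hφx ▸ hψ.1 x hx ▸ hψ.anc_of_anc hvx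

theorem lca_anc_lca_of_isChild (hm : ∀ v, IsLCA pH (leafImage pP φ v) (m v)) {v v' : VP}
    (hch : IsChild pP v' v) : Anc pH (m v) (m v') :=
  (hm v').2 _ fun _ ⟨x, hx, hvx, hφx⟩ => (hm v).1 _ ⟨x, hx, Anc.trans ⟨1, hch.1⟩ hvx, hφx⟩

theorem lca_eq_of_isLeaf {rH : VH} {dpH : VH → ℕ} (hH : IsRootedTree pH rH dpH)
    (hm : ∀ v, IsLCA pH (leafImage pP φ v) (m v)) {x : VP} (hx : IsLeaf pP x) : m x = φ x :=
  hH.eq_of_anc_of_depth_le ((hm x).1 _ ⟨x, hx, anc_refl x, rfl⟩) <| hH.depth_le_of_anc <|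
    (hm x).2 _ fun _ ⟨_, _, hxy, hφy⟩ => hφy ▸ eq_of_anc_of_isLeaf hx hxy ▸ anc_refl _

end Reconciliation

theorem stmt12_general {VP VH : Type*} (pP : VP → VP) (pH : VH → VH) (rH : VH)
    (dpH : VH → ℕ)
    (hH : IsRootedTree pH rH dpH)
    (φ : VP → VH)
    (m : VP → VH)
    (hm : ∀ v, IsLCA pH {h | ∃ x, IsLeaf pP x ∧ Anc pP v x ∧ φ x = h} (m v))
    (l : ℕ) (hl : 1 ≤ l) (Ψ : Fin l → VP → VH) (hΨ : ∀ i, IsRecon pP pH φ (Ψ i))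
    (ψmed : VP → VH)
    (hmed : ∀ v, ψmed v ∈ ASet pH rH (m v) ∧
      (tdist pH (m v) (ψmed v) : ℤ) =
        zmed ((Finset.univ.val : Multiset (Fin l)).map
          (fun i => (tdist pH (m v) (Ψ i v) : ℤ)))) :
    IsRecon pP pH φ ψmed := by
  have hne : (Finset.univ.val : Multiset (Fin l)) ≠ 0 := by
    simpa using (Finset.univ_nonempty_iff.mpr ⟨⟨0, hl⟩⟩).ne_empty
  refine ⟨fun x hx => ?_, fun v v' hch => ?_⟩
  · have hmx := lca_eq_of_isLeaf hH hm hx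
    have hdist : (tdist pH (m x) (ψmed x) : ℤ) = 0 := by
      refine (hmed x).2.trans (zmed_eq_of_forall_eq (by rwa [Ne, Multiset.map_eq_zero]) ?_)
      simp only [Multiset.mem_map, (hΨ _).1 x hx, ← hmx, tdist_self]
      rintro _ ⟨_, _, rfl⟩
      rfl
    rw [← hmx]
    exact hH.eq_of_anc_of_tdist_eq_zero (hmed x).1.2 (by exact_mod_cast hdist)
  · have hmm := lca_anc_lca_of_isChild hm hch
    refine (hH.anc_iff_tdist_le (hmed v).1.2 (hmed v').1.2 hmm).mpr ?_
    have hΨ_le (i : Fin l) :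
        tdist pH (m v') (Ψ i v') ≤ tdist pH (m v') (m v) + tdist pH (m v) (Ψ i v) :=
      (hH.anc_iff_tdist_le ((hΨ i).anc_lca hm v) ((hΨ i).anc_lca hm v') hmm).mp
        ((hΨ i).2 v v' hch)
    have hzmed : (tdist pH (m v') (ψmed v') : ℤ) ≤
        tdist pH (m v') (m v) + tdist pH (m v) (ψmed v) := by
      rw [(hmed v).2, (hmed v').2, ← zmed_map_const_add _ hne]
      exact zmed_map_mono fun i _ => by exact_mod_cast hΨ_le i
    exact_mod_cast hzmed

theorem stmt12 {VP VH : Type*} (pP : VP → VP) (pH : VH → VH) (rP : VP) (rH : VH)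
    (dpP : VP → ℕ) (dpH : VH → ℕ)
    (hP : IsRootedTree pP rP dpP) (hH : IsRootedTree pH rH dpH)
    (hbP : IsBinary pP) (hbH : IsBinary pH)
    (φ : VP → VH) (hφ : ∀ x, IsLeaf pP x → IsLeaf pH (φ x))
    (m : VP → VH)
    (hm : ∀ v, IsLCA pH {h | ∃ x, IsLeaf pP x ∧ Anc pP v x ∧ φ x = h} (m v))
    (l : ℕ) (hl : 1 ≤ l) (Ψ : Fin l → VP → VH) (hΨ : ∀ i, IsRecon pP pH φ (Ψ i))
    (ψmed : VP → VH)
    (hmed : ∀ v, ψmed v ∈ ASet pH rH (m v) ∧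
      (tdist pH (m v) (ψmed v) : ℤ) =
        zmed ((Finset.univ.val : Multiset (Fin l)).map
          (fun i => (tdist pH (m v) (Ψ i v) : ℤ)))) :
    IsRecon pP pH φ ψmed :=
  stmt12_general pP pH rH dpH hH φ m hm l hl Ψ hΨ ψmed hmed

end Recon
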